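/- From any point (E,S) in 𝒳 and any target (E',S') ∈ 𝒳, there exists a strategy Š agreeing with S on any prescribed finite prefix of length k such that G_{f₀}^{k+m}(E,Š) = (E',S'), where m is the number of coordinates in which the state reached after k iterations differs from E'. In particular every point of 𝒳 is reachable from every open ball. -/

import Mathlib

open scoped BigOperators
open MeasureTheory ProbabilityTheory

namespace CI

/-- Strategies: sequences with values in {1,…,N}, encoded as `Fin N`. -/
abbrev Strat (N : ℕ) := ℕ → Fin N
/-- States of the system: boolean vectors of length N. -/
abbrev CState (N : ℕ) := Fin N → Bool
/-- The phase space 𝒳 = {1,…,N}^ℕ × 𝔹^N. -/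
abbrev Pt (N : ℕ) := Strat N × CState N

/-- d_e : sum of the discrete metric over the coordinates. -/
noncomputable def de {N : ℕ} (E F : CState N) : ℝ :=
  ∑ k : Fin N, if E k = F k then (0 : ℝ) else 1

/-- d_s(S,Š) = (9/N) Σ_{k≥1} |S^k − Š^k| / 10^k  (indices shifted to start at 0). -/
noncomputable def ds (N : ℕ) (S T : Strat N) : ℝ :=
  (9 / N) * ∑' k : ℕ, |((S k : ℝ)) - ((T k : ℝ))| / 10 ^ (k + 1)

/-- The distance d = d_e + d_s on 𝒳. -/
noncomputable def dC {N : ℕ} (p q : Pt N) : ℝ := de p.2 q.2 + ds N p.1 q.1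

/-- Flip bit k of the state E. -/
def bflip {N : ℕ} (k : Fin N) (E : CState N) : CState N :=
  fun j => if j = k then !(E j) else E j

/-- F_f(k,E): equal to E except possibly in coordinate k, where it is f(E)_k. -/
def Ff {N : ℕ} (f : CState N → CState N) (k : Fin N) (E : CState N) : CState N :=
  fun j => if j = k then f E k else E j

/-- The chaotic-iterations map G_f(S,E) = (σ(S), F_f(S^0,E)). -/
def Gf {N : ℕ} (f : CState N → CState N) (p : Pt N) : Pt N :=
  (fun n => p.1 (n + 1), Ff f (p.1 0) p.2)

/-- The vectorial negation f₀. -/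
def f0 {N : ℕ} (E : CState N) : CState N := fun j => !(E j)

/-- G_{f₀}. -/
def G0 {N : ℕ} : Pt N → Pt N := Gf f0

/-- Open ball for the distance dC. -/
def ballC {N : ℕ} (x : Pt N) (r : ℝ) : Set (Pt N) := {y | dC x y < r}

/-- Open sets of the metric space (𝒳,d). -/
def IsOpenC {N : ℕ} (U : Set (Pt N)) : Prop := ∀ x ∈ U, ∃ ε > 0, ballC x ε ⊆ U

/-- Iterating the flip-one-coordinate dynamics along a strategy. -/
def runCI {N : ℕ} (S : ℕ → Fin N) (E : CState N) : ℕ → CState N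
  | 0 => E
  | n + 1 => bflip (S n) (runCI S E n)

/-- The CIDS (cover-dependent) strategy: S^k = k if k ≤ N and X_k = 1, else S^k = 1
(indices encoded from 0, so "1" is `0 : Fin N`). -/
def cids {N : ℕ} [NeZero N] (X : CState N) : ℕ → Fin N :=
  fun k => if h : k < N then (if X ⟨k, h⟩ then ⟨k, h⟩ else 0) else 0


/-! Under `G0` the state flips exactly the coordinate named by the head of the strategy. So
after `k` steps of `S` one can spend `m` steps flipping, one at a time, the `m` coordinates in
which the current state differs from `E'`, and then hand over to `S'`. -/

theorem hammingDist_update_add_one {ι : Type*} [Fintype ι] [DecidableEq ι] {β : ι → Type*}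
    [∀ i, DecidableEq (β i)] {x y : ∀ i, β i} {j : ι} (h : x j ≠ y j) :
    hammingDist (Function.update x j (y j)) y + 1 = hammingDist x y := by
  have hfilter : ({i | Function.update x j (y j) i ≠ y i} : Finset ι) =
      ({i | x i ≠ y i} : Finset ι).erase j := by
    ext i
    rcases eq_or_ne i j with rfl | hij <;> simp [*]
  rw [hammingDist, hfilter, Finset.card_erase_add_one (by simpa using h), hammingDist]

section

variable {N : ℕ}

lemma bflip_eq_update_of_ne {F E : CState N} {j : Fin N} (h : F j ≠ E j) :
    bflip j F = Function.update F j (E j) := by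
  funext i
  rcases eq_or_ne i j with rfl | hij
  · simpa [bflip] using Bool.eq_not.mpr h
  · simp [bflip, hij]

lemma runCI_congr {T T' : Strat N} {n : ℕ} (h : ∀ i < n, T i = T' i) (E : CState N) :
    runCI T E n = runCI T' E n := by
  induction n with
  | zero => rfl
  | succ n ih => rw [runCI, runCI, ih fun i hi => h i (by omega), h n (by omega)]

lemma runCI_add (T : Strat N) (E : CState N) (a b : ℕ) :
    runCI T E (a + b) = runCI (fun i => T (i + a)) (runCI T E a) b := by
  induction b with
  | zero => rfl
  | succ b ih => rw [← Nat.add_assoc, runCI, ih, runCI, Nat.add_comm b a]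

lemma G0_iterate (T : Strat N) (E : CState N) (n : ℕ) :
    G0^[n] ((T, E) : Pt N) = (fun i => T (i + n), runCI T E n) := by
  induction n with
  | zero => rfl
  | succ n ih =>
    rw [Function.iterate_succ_apply', ih]
    refine Prod.ext (funext fun i => congrArg T (by omega)) (funext fun j => ?_)
    by_cases hj : j = T n <;> simp [G0, Gf, Ff, f0, runCI, bflip, hj]

def prepend (n : ℕ) (A B : Strat N) : Strat N := fun i => if i < n then A i else B (i - n)

lemma prepend_of_lt {n i : ℕ} (A B : Strat N) (hi : i < n) : prepend n A B i = A i :=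
  if_pos hi

lemma prepend_add (n : ℕ) (A B : Strat N) : (fun i => prepend n A B (i + n)) = B :=
  funext fun i => by simp [prepend]

lemma runCI_prepend (n : ℕ) (A B : Strat N) (E : CState N) :
    runCI (prepend n A B) E n = runCI A E n :=
  runCI_congr (fun _ hi => prepend_of_lt A B hi) E

lemma runCI_prepend_add (n m : ℕ) (A B : Strat N) (E : CState N) :
    runCI (prepend n A B) E (n + m) = runCI B (runCI A E n) m := by
  rw [runCI_add, prepend_add, runCI_prepend]

lemma G0_iterate_prepend (n : ℕ) (A B : Strat N) (E : CState N) :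
    G0^[n] ((prepend n A B, E) : Pt N) = (B, runCI A E n) := by
  rw [G0_iterate, prepend_add, runCI_prepend]

theorem exists_runCI_hammingDist_eq [NeZero N] (F E : CState N) :
    ∃ T : Strat N, runCI T F (hammingDist F E) = E := by
  induction h : hammingDist F E generalizing F with
  | zero => exact ⟨fun _ => 0, hammingDist_eq_zero.mp h⟩
  | succ m ih =>
    obtain ⟨j, hj⟩ : ∃ j, F j ≠ E j :=
      Function.ne_iff.mp (hammingDist_ne_zero.mp (by omega))
    have hflip : hammingDist (bflip j F) E = m := by
      have := hammingDist_update_add_one hj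
      rw [← bflip_eq_update_of_ne hj] at this
      omega
    obtain ⟨T, hT⟩ := ih (bflip j F) hflip
    refine ⟨prepend 1 (fun _ => j) T, ?_⟩
    rw [Nat.add_comm, runCI_prepend_add]
    exact hT

end

theorem stmt15 {N : ℕ} [NeZero N] (S S' : Strat N) (E E' : CState N) (k : ℕ) :
    ∃ Sh : Strat N, (∀ i < k, Sh i = S i) ∧
      G0^[k + hammingDist (G0^[k] ((Sh, E) : Pt N)).2 E'] ((Sh, E) : Pt N) = (S', E') := by
  obtain ⟨T, hT⟩ := exists_runCI_hammingDist_eq (runCI S E k) E'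
  refine ⟨prepend k S (prepend (hammingDist (runCI S E k) E') T S'),
    fun i hi => prepend_of_lt _ _ hi, ?_⟩
  rw [G0_iterate_prepend, Nat.add_comm, Function.iterate_add_apply, G0_iterate_prepend,
    G0_iterate_prepend, hT]

end CI
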